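/- arXiv:1808.03888 — 4 statements merged into one kernel-verified Lean document; each statement's English description precedes it below -/
import Mathlib

section
/- Let $H$ be a hypergraph in which every edge contains at least $k$ vertices and meets (i.e., intersects) at most $d$ other edges. If $e(d+1) \leq 2^{k-1}$ (where $e$ is Euler's number), then $H$ has a 2-coloring, i.e., there exists a coloring of the vertices of $H$ with 2 colors such that no edge of $H$ is monochromatic. -/
/-!
This is the symmetric Lovász local lemma, proved by counting. Encode a 2-colouring of the
vertex set `U` by its colour class `T ⊆ U` and let `N(S)` be the number of colourings under which
no edge of `S` is monochromatic. By induction on `S`, for every edge `f ∉ S` at most a fraction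
`1/(d+1)` of these make `f` monochromatic: split `S` into the at most `d` edges meeting `f` and
the rest `S₂`. Recolouring `f` freely preserves the colourings counted by `N(S₂)`, so `f` is
monochromatic in at most a fraction `2^(1-k)` of them; and adding back the edges meeting `f` one
at a time costs, by the induction hypothesis, a factor `d/(d+1)` each, hence at most
`(1 + 1/d)^d ≤ e` in total. Consequently `N(E) ≥ (d/(d+1))^|E| · 2^|U| > 0`.
-/

open Finset Real

section LocalLemma

variable {Ω ι : Type*} [DecidableEq Ω] {Ω₀ : Finset Ω} {B : ι → Finset Ω}

/- Probabilities for the uniform measure on `Ω₀` are written as counts: `avoiding Ω₀ B S` is the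
event that none of the bad events `B i`, `i ∈ S`, occurs. -/
variable (Ω₀ B) in
def avoiding (S : Finset ι) : Finset Ω := Ω₀ \ S.biUnion B

lemma mem_avoiding {ω : Ω} {S : Finset ι} : ω ∈ avoiding Ω₀ B S ↔ ω ∈ Ω₀ ∧ ∀ i ∈ S, ω ∉ B i := by
  simp [avoiding]

lemma avoiding_anti {S T : Finset ι} (h : S ⊆ T) : avoiding Ω₀ B T ⊆ avoiding Ω₀ B S :=
  sdiff_subset_sdiff subset_rfl (biUnion_subset_biUnion_of_subset_left B h)

variable [DecidableEq ι]

lemma avoiding_insert (i : ι) (S : Finset ι) :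
    avoiding Ω₀ B (insert i S) = avoiding Ω₀ B S \ B i := by
  rw [avoiding, avoiding, biUnion_insert, sdiff_sdiff_left, sup_eq_union, union_comm]

lemma mul_card_avoiding_le_succ_mul_card_avoiding_insert {d : ℕ} {i : ι} {S : Finset ι}
    (h : (d + 1) * #(avoiding Ω₀ B S ∩ B i) ≤ #(avoiding Ω₀ B S)) :
    d * #(avoiding Ω₀ B S) ≤ (d + 1) * #(avoiding Ω₀ B (insert i S)) := by
  have hsplit := card_sdiff_add_card_inter (avoiding Ω₀ B S) (B i)
  rw [← avoiding_insert] at hsplit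
  nlinarith

lemma pow_mul_card_avoiding_sdiff_le {d : ℕ} {S A : Finset ι}
    (hstep : ∀ T ⊆ S, ∀ j ∈ S, j ∉ T →
      (d + 1) * #(avoiding Ω₀ B T ∩ B j) ≤ #(avoiding Ω₀ B T)) (hA : A ⊆ S) :
    d ^ #A * #(avoiding Ω₀ B (S \ A)) ≤ (d + 1) ^ #A * #(avoiding Ω₀ B S) := by
  induction A using Finset.induction_on with
  | empty => simp
  | insert j A hjA ih =>
    have hjS : j ∈ S := hA (mem_insert_self j A)
    have hins : insert j (S \ insert j A) = S \ A := by
      rw [sdiff_insert, insert_erase (mem_sdiff.2 ⟨hjS, hjA⟩)]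
    have hstep_j := mul_card_avoiding_le_succ_mul_card_avoiding_insert
      (hstep (S \ insert j A) sdiff_subset j hjS (by simp))
    rw [hins] at hstep_j
    rw [card_insert_of_notMem hjA, pow_succ, pow_succ]
    calc d ^ #A * d * #(avoiding Ω₀ B (S \ insert j A))
        ≤ d ^ #A * ((d + 1) * #(avoiding Ω₀ B (S \ A))) := by
          rw [mul_assoc]; exact Nat.mul_le_mul_left _ hstep_j
      _ = (d + 1) * (d ^ #A * #(avoiding Ω₀ B (S \ A))) := by ring
      _ ≤ (d + 1) * ((d + 1) ^ #A * #(avoiding Ω₀ B S)) :=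
          Nat.mul_le_mul_left _ (ih ((subset_insert j A).trans hA))
      _ = (d + 1) ^ #A * (d + 1) * #(avoiding Ω₀ B S) := by ring

lemma mul_add_one_pow_succ_le_pow {p : ℝ} {d m : ℕ}
    (hp : p * (d + 1) ^ (d + 1) ≤ d ^ d) (hm : m ≤ d) : p * (d + 1) ^ (m + 1) ≤ d ^ m := by
  obtain ⟨r, rfl⟩ := Nat.exists_eq_add_of_le hm
  push_cast at hp ⊢
  refine le_of_mul_le_mul_right ?_ (by positivity : (0 : ℝ) < (m + r + 1) ^ r)
  calc p * ((m : ℝ) + r + 1) ^ (m + 1) * (m + r + 1) ^ r = p * (m + r + 1) ^ (m + r + 1) := by ring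
    _ ≤ (m + r) ^ (m + r) := hp
    _ = (m + r) ^ m * (m + r) ^ r := pow_add _ _ _
    _ ≤ (m + r) ^ m * (m + r + 1) ^ r := by gcongr ?_ * ?_ ^ _; linarith

variable {I : Finset ι} {N : ι → Finset ι} {p : ℝ} {d : ℕ}

theorem succ_mul_card_avoiding_inter_le (hN : ∀ i ∈ I, #(N i) ≤ d)
    (hind : ∀ i ∈ I, ∀ S ⊆ I, i ∉ S → Disjoint S (N i) →
      (#(avoiding Ω₀ B S ∩ B i) : ℝ) ≤ p * #(avoiding Ω₀ B S))
    (hp : p * (d + 1) ^ (d + 1) ≤ d ^ d) :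
    ∀ S ⊆ I, ∀ i ∈ I, i ∉ S → (d + 1) * #(avoiding Ω₀ B S ∩ B i) ≤ #(avoiding Ω₀ B S) := by
  intro S
  induction S using Finset.strongInduction with
  | H S ih =>
  intro hSI i hi hiS
  have hpeel := pow_mul_card_avoiding_sdiff_le (Ω₀ := Ω₀) (B := B) (d := d)
    (fun T hTS j hjS hjT => ih T (hTS.ssubset_of_not_subset fun h => hjT (h hjS))
      (hTS.trans hSI) j (hSI hjS) hjT) (inter_subset_left : S ∩ N i ⊆ S)
  rw [sdiff_inter_self_left] at hpeel
  have hm : #(S ∩ N i) ≤ d := (card_le_card inter_subset_right).trans (hN i hi)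
  have hmono : #(avoiding Ω₀ B S ∩ B i) ≤ #(avoiding Ω₀ B (S \ N i) ∩ B i) :=
    card_le_card (inter_subset_inter_right (avoiding_anti sdiff_subset))
  have hindep := hind i hi (S \ N i) (sdiff_subset.trans hSI) (fun h => hiS (mem_sdiff.1 h).1)
    sdiff_disjoint
  have hscalar := mul_add_one_pow_succ_le_pow hp hm
  have hdm : (0 : ℝ) < (d : ℝ) ^ #(S ∩ N i) := by
    rcases Nat.eq_zero_or_pos d with rfl | hd
    · simp [Nat.le_zero.1 hm]
    · positivity
  set m := #(S ∩ N i)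
  set a := #(avoiding Ω₀ B S ∩ B i)
  set b := #(avoiding Ω₀ B (S \ N i))
  set c := #(avoiding Ω₀ B S)
  have hpeel' : (d : ℝ) ^ m * b ≤ (d + 1) ^ m * c := by exact_mod_cast hpeel
  have ha : (a : ℝ) ≤ p * b := le_trans (by exact_mod_cast hmono) hindep
  obtain hp0 | hp0 := lt_or_ge p 0
  · have ha0 : (a : ℝ) ≤ 0 := ha.trans (mul_nonpos_of_nonpos_of_nonneg hp0.le b.cast_nonneg)
    simp [show a = 0 by exact_mod_cast ha0.antisymm a.cast_nonneg]
  suffices ((d : ℝ) + 1) * a * d ^ m ≤ c * d ^ m by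
    exact_mod_cast le_of_mul_le_mul_right this hdm
  calc ((d : ℝ) + 1) * a * d ^ m ≤ (d + 1) * (p * b) * d ^ m := by gcongr
    _ = p * (d + 1) * (d ^ m * b) := by ring
    _ ≤ p * (d + 1) * ((d + 1) ^ m * c) := by gcongr
    _ = p * (d + 1) ^ (m + 1) * c := by ring
    _ ≤ d ^ m * c := by gcongr
    _ = c * d ^ m := by ring

theorem pow_mul_card_le_pow_mul_card_avoiding (hN : ∀ i ∈ I, #(N i) ≤ d)
    (hind : ∀ i ∈ I, ∀ S ⊆ I, i ∉ S → Disjoint S (N i) →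
      (#(avoiding Ω₀ B S ∩ B i) : ℝ) ≤ p * #(avoiding Ω₀ B S))
    (hp : p * (d + 1) ^ (d + 1) ≤ d ^ d) :
    d ^ #I * #Ω₀ ≤ (d + 1) ^ #I * #(avoiding Ω₀ B I) := by
  simpa [avoiding] using pow_mul_card_avoiding_sdiff_le
    (fun T hT j hj hjT => succ_mul_card_avoiding_inter_le hN hind hp T hT j hj hjT) subset_rfl

end LocalLemma

section TwoColoring

variable {V : Type*} [DecidableEq V]

/- A 2-colouring of `U` is encoded by its colour class `T ⊆ U`. -/
def monochromatic (U f : Finset V) : Finset (Finset V) :=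
  {T ∈ U.powerset | f ⊆ T ∨ Disjoint f T}

lemma mem_monochromatic {U f T : Finset V} :
    T ∈ monochromatic U f ↔ T ⊆ U ∧ (f ⊆ T ∨ Disjoint f T) := by
  rw [monochromatic, mem_filter, mem_powerset]

lemma subset_or_disjoint_iff_of_sdiff_eq {f g T T' : Finset V} (hfg : Disjoint f g)
    (h : T' \ f = T \ f) : (g ⊆ T' ∨ Disjoint g T') ↔ (g ⊆ T ∨ Disjoint g T) := by
  have hsdiff : ∀ X : Finset V, (g ⊆ X ∨ Disjoint g X) ↔ (g ⊆ X \ f ∨ Disjoint g (X \ f)) := by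
    simp only [subset_iff, disjoint_left, mem_sdiff] at hfg ⊢
    grind
  rw [hsdiff T', hsdiff T, h]

lemma card_inter_monochromatic_mul_le {U f : Finset V} {G : Finset (Finset V)} (hf : f ⊆ U)
    (hG : G ⊆ U.powerset) (hinv : ∀ T ∈ G, ∀ T' ⊆ U, T' \ f = T \ f → T' ∈ G) :
    #(G ∩ monochromatic U f) * 2 ^ #f ≤ 2 * #G := by
  have hfiber_mono : ∀ R, #{T ∈ G ∩ monochromatic U f | T \ f = R} ≤ 2 := by
    intro R
    refine (card_le_card fun T hT => ?_).trans (card_le_two (a := R) (b := R ∪ f))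
    rw [mem_filter, mem_inter, mem_monochromatic] at hT
    obtain ⟨⟨-, -, hsub | hdisj⟩, rfl⟩ := hT
    · simp [sdiff_union_of_subset hsub]
    · simp [sdiff_eq_self_of_disjoint hdisj.symm]
  have hfiber : ∀ R ∈ G.image (· \ f), 2 ^ #f ≤ #{T ∈ G | T \ f = R} := by
    intro R hR
    obtain ⟨T₀, hT₀, rfl⟩ := mem_image.1 hR
    rw [← card_powerset]
    refine card_le_card_of_injOn (T₀ \ f ∪ ·) (fun F hF => ?_) (fun F hF F' hF' hFF' => ?_)
    · rw [mem_coe, mem_powerset] at hF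
      have hsdiff : (T₀ \ f ∪ F) \ f = T₀ \ f := by
        rw [union_sdiff_distrib, Finset.sdiff_idem, sdiff_eq_empty_iff_subset.2 hF, union_empty]
      have hU : T₀ \ f ∪ F ⊆ U :=
        union_subset (sdiff_subset.trans (mem_powerset.1 (hG hT₀))) (hF.trans hf)
      exact mem_filter.2 ⟨hinv T₀ hT₀ _ hU hsdiff, hsdiff⟩
    · rw [mem_coe, mem_powerset] at hF hF'
      have hdisj : ∀ {F}, F ⊆ f → Disjoint (T₀ \ f) F :=
        fun h => disjoint_sdiff_self_left.mono_right h
      calc F = (T₀ \ f ∪ F) \ (T₀ \ f) := (union_sdiff_cancel_left (hdisj hF)).symm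
        _ = (T₀ \ f ∪ F') \ (T₀ \ f) := by rw [show T₀ \ f ∪ F = T₀ \ f ∪ F' from hFF']
        _ = F' := union_sdiff_cancel_left (hdisj hF')
  calc #(G ∩ monochromatic U f) * 2 ^ #f
      ≤ 2 * #((G ∩ monochromatic U f).image (· \ f)) * 2 ^ #f := by
        gcongr; exact card_le_mul_card_image _ 2 fun R _ => hfiber_mono R
    _ ≤ 2 * #(G.image (· \ f)) * 2 ^ #f := by
        gcongr; exact inter_subset_left
    _ = 2 * (2 ^ #f * #(G.image (· \ f))) := by ring
    _ ≤ 2 * #G := by gcongr; exact mul_card_image_le_card _ _ hfiber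

lemma mem_avoiding_monochromatic_of_sdiff_eq {U f T T' : Finset V} {S : Finset (Finset V)}
    (hS : ∀ g ∈ S, Disjoint f g) (hT : T ∈ avoiding U.powerset (monochromatic U) S)
    (hT' : T' ⊆ U) (h : T' \ f = T \ f) : T' ∈ avoiding U.powerset (monochromatic U) S := by
  rw [mem_avoiding, mem_powerset] at hT ⊢
  refine ⟨hT', fun g hg hmono => hT.2 g hg ?_⟩
  rw [mem_monochromatic] at hmono ⊢
  exact ⟨hT.1, (subset_or_disjoint_iff_of_sdiff_eq (hS g hg) h).1 hmono.2⟩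

lemma card_avoiding_inter_monochromatic_le {U f : Finset V} {S : Finset (Finset V)} {k : ℕ}
    (hf : f ⊆ U) (hk : k ≤ #f) (hS : ∀ g ∈ S, Disjoint f g) :
    (#(avoiding U.powerset (monochromatic U) S ∩ monochromatic U f) : ℝ) ≤
      2 / 2 ^ k * #(avoiding U.powerset (monochromatic U) S) := by
  have hcount := card_inter_monochromatic_mul_le hf sdiff_subset
    fun T hT T' hT' h => mem_avoiding_monochromatic_of_sdiff_eq hS hT hT' h
  calc (#(avoiding U.powerset (monochromatic U) S ∩ monochromatic U f) : ℝ)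
      ≤ 2 / 2 ^ #f * #(avoiding U.powerset (monochromatic U) S) := by
        rw [div_mul_eq_mul_div, le_div_iff₀ (by positivity)]
        exact_mod_cast hcount
    _ ≤ 2 / 2 ^ k * #(avoiding U.powerset (monochromatic U) S) := by
        gcongr
        norm_num

lemma disjoint_of_disjoint_filter_meet {E S : Finset (Finset V)} {f : Finset V} (hSE : S ⊆ E)
    (hfS : f ∉ S) (hdisj : Disjoint S {g ∈ E | g ≠ f ∧ (f ∩ g).Nonempty}) :
    ∀ g ∈ S, Disjoint f g := by
  intro g hg
  have hg' := disjoint_left.1 hdisj hg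
  simp only [mem_filter, hSE hg, ne_of_mem_of_not_mem hg hfS, true_and, ne_eq,
    not_false_eq_true] at hg'
  exact disjoint_iff_inter_eq_empty.2 (not_nonempty_iff_eq_empty.1 hg')

lemma not_monochromatic_of_mem_avoiding {U T f : Finset V} {E : Finset (Finset V)}
    (hT : T ∈ avoiding U.powerset (monochromatic U) E) (hf : f ∈ E) :
    ¬(f ⊆ T ∨ Disjoint f T) := fun hmono => by
  rw [mem_avoiding, mem_powerset] at hT
  exact hT.2 f hf (mem_monochromatic.2 ⟨hT.1, hmono⟩)

end TwoColoring

lemma add_one_pow_le_exp_one_mul_pow (d : ℕ) : ((d : ℝ) + 1) ^ d ≤ exp 1 * d ^ d := by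
  rcases d.eq_zero_or_pos with rfl | hd
  · simp
  have hd' : (d : ℝ) ≠ 0 := by positivity
  calc ((d : ℝ) + 1) ^ d = d ^ d * (1 + (d : ℝ)⁻¹) ^ d := by
        rw [← mul_pow, mul_add, mul_inv_cancel₀ hd', mul_one]
    _ ≤ d ^ d * exp 1 := by gcongr; exact one_add_inv_pow_le_exp
    _ = exp 1 * d ^ d := mul_comm _ _

lemma exists_le_two_div_two_pow_mul_le {d k : ℕ} (h : exp 1 * ((d : ℝ) + 1) ≤ 2 ^ (k - 1)) :
    ∃ d' : ℕ, d ≤ d' ∧ 0 < d' ∧ 2 / 2 ^ k * ((d' : ℝ) + 1) ^ (d' + 1) ≤ d' ^ d' := by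
  have he : 2 < exp 1 := lt_trans (by norm_num) exp_one_gt_d9
  have hq : 2 < (2 : ℝ) ^ (k - 1) := he.trans_le (le_mul_of_one_le_right (exp_pos 1).le
    (by linarith [(d.cast_nonneg : (0 : ℝ) ≤ d)]) |>.trans h)
  have hk : 2 ≤ k - 1 := by
    by_contra! hk
    interval_cases (k - 1) <;> norm_num at hq
  have h2k : (2 : ℝ) / 2 ^ k = ((2 : ℝ) ^ (k - 1))⁻¹ := by
    rw [show k = k - 1 + 1 by omega, pow_succ, Nat.add_sub_cancel,
      div_mul_cancel_right₀ two_ne_zero]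
  -- The local lemma says nothing for `d' = 0`, so `d = 0` is treated as `d' = 1`; this needs `k ≥ 3`.
  rcases d.eq_zero_or_pos with rfl | hd
  · refine ⟨1, zero_le_one, one_pos, ?_⟩
    rw [h2k, inv_mul_le_iff₀ (by positivity)]
    calc ((1 : ℕ) + 1 : ℝ) ^ (1 + 1) = 2 ^ 2 := by norm_num
      _ ≤ 2 ^ (k - 1) := pow_le_pow_right₀ one_le_two hk
      _ = 2 ^ (k - 1) * (1 : ℕ) ^ 1 := by simp
  · refine ⟨d, le_rfl, hd, ?_⟩
    rw [h2k, inv_mul_le_iff₀ (by positivity)]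
    calc ((d : ℝ) + 1) ^ (d + 1) = ((d : ℝ) + 1) ^ d * (d + 1) := pow_succ _ _
      _ ≤ exp 1 * d ^ d * (d + 1) := by gcongr; exact add_one_pow_le_exp_one_mul_pow d
      _ = exp 1 * (d + 1) * d ^ d := by ring
      _ ≤ 2 ^ (k - 1) * d ^ d := by gcongr

/-- **Theorem (Erdős–Lovász 1975).** Let `H` be a hypergraph in which every edge
contains at least `k` vertices and meets at most `d` other edges.
If `e(d+1) ≤ 2^(k-1)` then `H` has a 2-coloring, i.e. there is a coloring of the
vertices with 2 colors such that no edge is monochromatic. -/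
theorem hypergraph_two_coloring_EL {V : Type*} [DecidableEq V]
    (E : Finset (Finset V)) (k d : ℕ)
    (hcard : ∀ f ∈ E, k ≤ f.card)
    (hmeet : ∀ f ∈ E, (E.filter (fun g => g ≠ f ∧ (f ∩ g).Nonempty)).card ≤ d)
    (hineq : Real.exp 1 * ((d : ℝ) + 1) ≤ 2 ^ (k - 1)) :
    ∃ c : V → Fin 2, ∀ f ∈ E, ∃ v ∈ f, ∃ w ∈ f, c v ≠ c w := by
  obtain ⟨d', hdd', hd', hsharp⟩ := exists_le_two_div_two_pow_mul_le hineq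
  set U := E.sup id
  have hU : ∀ f ∈ E, f ⊆ U := fun f hf => le_sup (f := id) hf
  have hind : ∀ f ∈ E, ∀ S ⊆ E, f ∉ S → Disjoint S {g ∈ E | g ≠ f ∧ (f ∩ g).Nonempty} →
      (#(avoiding U.powerset (monochromatic U) S ∩ monochromatic U f) : ℝ) ≤
        2 / 2 ^ k * #(avoiding U.powerset (monochromatic U) S) :=
    fun f hf S hSE hfS hdisj => card_avoiding_inter_monochromatic_le (hU f hf) (hcard f hf)
      (disjoint_of_disjoint_filter_meet hSE hfS hdisj)
  have hLLL := pow_mul_card_le_pow_mul_card_avoiding (fun f hf => (hmeet f hf).trans hdd')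
    hind hsharp
  obtain ⟨T, hT⟩ : (avoiding U.powerset (monochromatic U) E).Nonempty := by
    rw [← card_pos]
    exact Nat.pos_of_mul_pos_left ((by positivity : 0 < d' ^ #E * #U.powerset).trans_le hLLL)
  refine ⟨fun v => if v ∈ T then 0 else 1, fun f hf => ?_⟩
  obtain ⟨⟨v, hv, hvT⟩, ⟨w, hw, hwT⟩⟩ := not_or.1 (not_monochromatic_of_mem_avoiding hT hf)
    |>.imp not_subset.1 not_disjoint_iff.1
  exact ⟨w, hw, v, hv, by simp [hvT, hwT]⟩
end

section
/- Let $H$ be a hypergraph in which every edge contains at least $k$ vertices and meets (i.e., intersects) at most $d$ other edges. Let $t \geq 2$ be an integer with $k \geq 2t$. If $e (1 - 1/t)^{k-1} (1 - 1/t + k/t) ((d+1)(t-1) + 1) \leq 1$ (where $e$ is Euler's number), then $H$ has a $(t,2)$-coloring, i.e., there exists a coloring of the vertices of $H$ with $t$ colors such that every color appears on every edge at least twice. -/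
/-!
Colour the vertices uniformly at random and let `A (f, i)` be the event that colour `i` appears
at most once on `f`. Its probability is `(1 - 1/t)^(m-1) (1 - 1/t + m/t)` for `|f| = m`, which is
at most the value at `m = k`. Conditioned on the colouring outside `f`, `A (f, i)` is decreasing
and "every event `A (g, i)`, and every `A (g, j)` with `g` disjoint from `f`, fails" is increasing
in the set of `i`-coloured vertices of `f`; the colour classes have a log-modular law, so Harris'
inequality makes the two negatively correlated. Thus `A (f, i)` only has to be treated as
dependent on the at most `D = (d + 1)(t - 1)` events `A (g, j)` with `j ≠ i` and `g` meeting `f`,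
and the lopsided local lemma with `x = 1/(D + 1)` applies because `(1 - x)^D ≥ 1/e`.
-/

open Finset

section Harris
variable {Ω L : Type*} [Fintype Ω] [Fintype L] [DistribLattice L] [DecidableEq L]

theorem harris_of_card_fiber_mul_le (π : Ω → L)
    (hπ : ∀ a b, #{ω | π ω = a} * #{ω | π ω = b} ≤ #{ω | π ω = a ⊓ b} * #{ω | π ω = a ⊔ b})
    {P Q : Ω → Prop} [DecidablePred P] [DecidablePred Q]
    (hP : ∀ ω ω', π ω ≤ π ω' → P ω' → P ω) (hQ : ∀ ω ω', π ω ≤ π ω' → Q ω → Q ω') :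
    Fintype.card Ω * #{ω | P ω ∧ Q ω} ≤ #{ω | P ω} * #{ω | Q ω} := by
  have hsum (R : Ω → Prop) [DecidablePred R] : ∑ a, #{ω | R ω ∧ π ω = a} = #{ω | R ω} := by
    rw [card_eq_sum_card_fiberwise (f := π) (t := univ) fun _ _ => mem_coe.2 (mem_univ _)]
    simp only [filter_filter]
  have hfiber (R : Ω → Prop) [DecidablePred R] (a : L) (hR : ∀ ω, π ω = a → R ω) :
      #{ω | R ω ∧ π ω = a} = #{ω | π ω = a} :=
    congrArg card (filter_congr fun ω _ => ⟨And.right, fun h => ⟨hR ω h, h⟩⟩)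
  have key := four_functions_theorem_univ (fun a => #{ω | (P ω ∧ Q ω) ∧ π ω = a})
    (fun a => #{ω | π ω = a}) (fun a => #{ω | P ω ∧ π ω = a}) (fun a => #{ω | Q ω ∧ π ω = a})
    (fun _ => Nat.zero_le _) (fun _ => Nat.zero_le _) (fun _ => Nat.zero_le _)
    (fun _ => Nat.zero_le _) fun a b => ?_
  · have hcard : ∑ a, #{ω | π ω = a} = Fintype.card Ω := by simpa using hsum fun _ => True
    simpa [hsum, hcard, mul_comm] using key
  obtain hempty | ⟨ω₀, hω₀⟩ := (filter (fun ω => (P ω ∧ Q ω) ∧ π ω = a) univ).eq_empty_or_nonempty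
  · simp [hempty]
  obtain ⟨⟨hPω₀, hQω₀⟩, rfl⟩ := (mem_filter.1 hω₀).2
  rw [hfiber P _ fun ω hω => hP ω ω₀ (hω ▸ inf_le_left) hPω₀,
    hfiber Q _ fun ω hω => hQ ω₀ ω (hω ▸ le_sup_left) hQω₀]
  calc #{ω | (P ω ∧ Q ω) ∧ π ω = π ω₀} * #{ω | π ω = b}
      ≤ #{ω | π ω = π ω₀} * #{ω | π ω = b} :=
        Nat.mul_le_mul_right _ (card_le_card (monotone_filter_right _ fun _ _ => And.right))
    _ ≤ _ := hπ _ _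

theorem card_mul_card_filter_and_le_of_fiberwise {β γ : Type*} [Fintype β] [Fintype γ]
    {P Q : β × γ → Prop} [DecidablePred P] [DecidablePred Q]
    (hP : ∀ b c c', P (b, c) → P (b, c'))
    (h : ∀ c, Fintype.card β * #{b | P (b, c) ∧ Q (b, c)} ≤ #{b | P (b, c)} * #{b | Q (b, c)}) :
    Fintype.card (β × γ) * #{x | P x ∧ Q x} ≤ #{x | P x} * #{x | Q x} := by
  have hsum (R : β × γ → Prop) [DecidablePred R] : #{x | R x} = ∑ c, #{b | R (b, c)} := by
    simp only [card_filter, Fintype.sum_prod_type_right]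
  have hPsum (c : γ) : ∑ c', #{b | P (b, c')} = Fintype.card γ * #{b | P (b, c)} := by
    rw [← smul_eq_mul, ← card_univ, ← sum_const]
    exact sum_congr rfl fun c' _ =>
      congrArg card (filter_congr fun b _ => ⟨hP b c' c, hP b c c'⟩)
  rw [hsum, hsum P, hsum Q, Fintype.card_prod, mul_sum, mul_sum]
  refine sum_le_sum fun c _ => ?_
  rw [hPsum c, mul_comm (Fintype.card β), mul_assoc, mul_assoc]
  exact Nat.mul_le_mul_left _ (h c)

end Harris

section ColorClass
variable {α : Type*} [Fintype α] [DecidableEq α] {t : ℕ}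

theorem card_filter_colorClass_eq (i : Fin t) {s T : Finset α} (hT : T ⊆ s) :
    #{σ : α → Fin t | {v ∈ s | σ v = i} = T} =
      (t - 1) ^ (#s - #T) * t ^ (Fintype.card α - #s) := by
  have : ({σ : α → Fin t | {v ∈ s | σ v = i} = T} : Finset _) =
      Fintype.piFinset fun v => if v ∈ T then {i} else if v ∈ s then {i}ᶜ else univ := by
    ext σ
    simp only [mem_filter, mem_univ, true_and, Fintype.mem_piFinset, Finset.ext_iff]
    refine forall_congr' fun v => ?_
    have := @hT v
    split_ifs <;> simp_all
  rw [this, Fintype.card_piFinset]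
  have h₁ : ({v ∈ {v | v ∉ T} | v ∈ s} : Finset α) = s \ T := by ext; simp [and_comm]
  have h₂ : ({v ∈ {v | v ∉ T} | v ∉ s} : Finset α) = sᶜ := by
    ext v; simpa using fun hv _ => hv (hT ‹_›)
  simp [apply_ite card, prod_ite, h₁, h₂, card_sdiff_of_subset hT, card_compl]

theorem card_filter_card_colorClass_eq (i : Fin t) (s : Finset α) (j : ℕ) :
    #{σ : α → Fin t | #{v ∈ s | σ v = i} = j} =
      (#s).choose j * ((t - 1) ^ (#s - j) * t ^ (Fintype.card α - #s)) := by
  rw [card_eq_sum_card_fiberwise (f := fun σ : α → Fin t => {v ∈ s | σ v = i})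
    (t := s.powersetCard j) fun σ hσ => mem_powersetCard.2 ⟨filter_subset _ _, (mem_filter.1 hσ).2⟩,
    ← card_powersetCard, ← smul_eq_mul, ← sum_const]
  refine sum_congr rfl fun T hT => ?_
  obtain ⟨hTs, rfl⟩ := mem_powersetCard.1 hT
  rw [← card_filter_colorClass_eq i hTs, filter_filter]
  exact congrArg card (filter_congr fun σ _ => ⟨And.right, fun h => ⟨h ▸ rfl, h⟩⟩)

def badColorings (s : Finset α) (i : Fin t) : Finset (α → Fin t) :=
  {σ | #{v ∈ s | σ v = i} ≤ 1}

theorem card_badColorings (s : Finset α) (i : Fin t) :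
    #(badColorings s i) = ((t - 1) ^ #s + #s * (t - 1) ^ (#s - 1)) * t ^ (Fintype.card α - #s) := by
  simp_rw [badColorings, Nat.le_one_iff_eq_zero_or_eq_one, filter_or]
  rw [card_union_of_disjoint (disjoint_filter.2 fun _ _ h₀ h₁ => by omega),
    card_filter_card_colorClass_eq, card_filter_card_colorClass_eq]
  simp only [Nat.choose_zero_right, Nat.choose_one_right, Nat.sub_zero]
  ring

theorem card_badColorings_le (ht : 1 ≤ t) (i : Fin t) {s : Finset α} {k : ℕ} (hk : 1 ≤ k)
    (hks : k ≤ #s) :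
    (#(badColorings s i) : ℝ) ≤
      (1 - 1 / (t : ℝ)) ^ (k - 1) * (1 - 1 / (t : ℝ) + k / t) * t ^ Fintype.card α := by
  obtain ⟨s', hs's, rfl⟩ := exists_subset_card_eq hks
  have hmono : badColorings s i ⊆ badColorings s' i :=
    monotone_filter_right _ fun σ _ h => (card_le_card (filter_subset_filter _ hs's)).trans h
  refine (Nat.cast_le.2 (card_le_card hmono)).trans (le_of_eq ?_)
  rw [card_badColorings]
  obtain ⟨m, hm⟩ : ∃ m, #s' = m + 1 := ⟨#s' - 1, by omega⟩
  obtain ⟨r, hr⟩ : ∃ r, Fintype.card α = #s' + r :=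
    ⟨_, (Nat.add_sub_of_le (card_le_univ s')).symm⟩
  have htR : (0 : ℝ) < t := by exact_mod_cast ht
  rw [hr, hm, Nat.add_sub_cancel_left, Nat.add_sub_cancel]
  have hsub : 1 - 1 / (t : ℝ) = (t - 1) / t := by field_simp
  push_cast [Nat.cast_sub ht, hsub, div_pow]
  field_simp
  ring

theorem card_filter_colorClass_mul_le (i : Fin t) (a b : Finset α) :
    #{σ : α → Fin t | ({v | σ v = i} : Finset α) = a} *
        #{σ : α → Fin t | ({v | σ v = i} : Finset α) = b} ≤
      #{σ : α → Fin t | ({v | σ v = i} : Finset α) = a ⊓ b} *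
        #{σ : α → Fin t | ({v | σ v = i} : Finset α) = a ⊔ b} := by
  simp only [card_filter_colorClass_eq i (subset_univ _), card_univ, Nat.sub_self, pow_zero,
    mul_one, ← pow_add, inf_eq_inter, sup_eq_union]
  have := card_inter_add_card_union a b
  have := card_le_univ (a ∪ b)
  have := card_le_card (subset_union_left (s₁ := a) (s₂ := b))
  have := card_le_card (subset_union_right (s₁ := a) (s₂ := b))
  exact le_of_eq (congrArg _ (by omega))

theorem harris_colorClass (i : Fin t) {P Q : (α → Fin t) → Prop} [DecidablePred P]
    [DecidablePred Q]
    (hP : ∀ σ σ', ({v | σ v = i} : Finset α) ⊆ ({v | σ' v = i} : Finset α) → P σ' → P σ)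
    (hQ : ∀ σ σ', ({v | σ v = i} : Finset α) ⊆ ({v | σ' v = i} : Finset α) → Q σ → Q σ') :
    t ^ Fintype.card α * #{σ | P σ ∧ Q σ} ≤ #{σ | P σ} * #{σ | Q σ} := by
  simpa using harris_of_card_fiber_mul_le (fun σ : α → Fin t => ({v | σ v = i} : Finset α))
    (card_filter_colorClass_mul_le i) hP hQ

theorem harris_colorClass_inter (i : Fin t) (s : Finset α) {P Q : (α → Fin t) → Prop}
    [DecidablePred P] [DecidablePred Q]
    (hP : ∀ σ σ', (∀ v ∈ s, σ v = i → σ' v = i) → P σ' → P σ)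
    (hQ : ∀ σ σ', (∀ v ∉ s, σ v = σ' v) → (∀ v ∈ s, σ v = i → σ' v = i) → Q σ → Q σ') :
    t ^ Fintype.card α * #{σ | P σ ∧ Q σ} ≤ #{σ | P σ} * #{σ | Q σ} := by
  let e := Equiv.piEquivPiSubtypeProd (· ∈ s) fun _ => Fin t
  have he (R : (α → Fin t) → Prop) [DecidablePred R] : #{σ | R σ} = #{x | R (e.symm x)} :=
    card_equiv e (by simp)
  have hcard : t ^ Fintype.card α = Fintype.card (α → Fin t) := by simp
  rw [hcard, Fintype.card_congr e, he, he P, he Q]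
  have he_mem (ρ τ) {v} (hv : v ∈ s) : e.symm (ρ, τ) v = ρ ⟨v, hv⟩ := by simp [e, hv]
  have he_notMem (ρ τ) {v} (hv : v ∉ s) : e.symm (ρ, τ) v = τ ⟨v, hv⟩ := by simp [e, hv]
  have hclass {ρ ρ' : s → Fin t} (hρ : ({v | ρ v = i} : Finset s) ⊆ ({v | ρ' v = i} : Finset s))
      (τ τ') (v) (hv : v ∈ s) (hvi : e.symm (ρ, τ) v = i) : e.symm (ρ', τ') v = i := by
    rw [he_mem _ _ hv] at hvi ⊢
    simpa using hρ (by simpa using hvi)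
  refine card_mul_card_filter_and_le_of_fiberwise
    (fun ρ τ τ' => hP _ _ fun v hv hvi => by rwa [he_mem _ _ hv] at hvi ⊢) fun τ => ?_
  simpa using harris_colorClass i (P := fun ρ => P (e.symm (ρ, τ)))
    (Q := fun ρ => Q (e.symm (ρ, τ))) (fun ρ ρ' hρ => hP _ _ (hclass hρ τ τ))
    fun ρ ρ' hρ => hQ _ _ (fun v hv => by rw [he_notMem _ _ hv, he_notMem _ _ hv]) (hclass hρ τ τ)

end ColorClass

section LocalLemma
variable {Ω ι : Type*} [Fintype Ω] [DecidableEq Ω] [DecidableEq ι] (A : ι → Finset Ω)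

theorem card_compl_biUnion_insert_add (q : ι) (Γ : Finset ι) :
    #((insert q Γ).biUnion A)ᶜ + #(A q ∩ (Γ.biUnion A)ᶜ) = #(Γ.biUnion A)ᶜ := by
  rw [biUnion_insert, compl_union, inter_comm (A q)ᶜ, ← sdiff_eq_inter_compl, inter_comm,
    card_sdiff_add_card_inter]

variable {A} {x : ℝ}

theorem one_sub_pow_mul_card_compl_biUnion_le (hx : x ≤ 1) (S : Finset ι) {Δ : Finset ι}
    (hSΔ : Disjoint S Δ)
    (h : ∀ q ∈ Δ, ∀ T ⊆ S ∪ Δ, q ∉ T → (#(A q ∩ (T.biUnion A)ᶜ) : ℝ) ≤ x * #(T.biUnion A)ᶜ) :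
    (1 - x) ^ #Δ * #(S.biUnion A)ᶜ ≤ #((S ∪ Δ).biUnion A)ᶜ := by
  induction Δ using Finset.induction_on with
  | empty => simp
  | @insert q Δ hqΔ ih =>
    rw [disjoint_insert_right] at hSΔ
    have hq : q ∉ S ∪ Δ := by simp [hqΔ, hSΔ.1]
    have hstep := congrArg (Nat.cast (R := ℝ)) (card_compl_biUnion_insert_add A q (S ∪ Δ))
    push_cast at hstep
    have hbound := h q (mem_insert_self q Δ) (S ∪ Δ)
      (union_subset_union_right (subset_insert q Δ)) hq
    have ih := ih hSΔ.2 fun q' hq' T hT => h q' (mem_insert_of_mem hq') T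
      (hT.trans (union_subset_union_right (subset_insert q Δ)))
    rw [union_insert, card_insert_of_notMem hqΔ, pow_succ', mul_assoc]
    calc (1 - x) * ((1 - x) ^ #Δ * #(S.biUnion A)ᶜ)
        ≤ (1 - x) * #((S ∪ Δ).biUnion A)ᶜ := mul_le_mul_of_nonneg_left ih (by linarith)
      _ ≤ #((insert q (S ∪ Δ)).biUnion A)ᶜ := by linarith

variable {I : Finset ι} {G : ι → ι → Prop} [∀ p, DecidablePred (G p)] {D : ℕ}

theorem card_inter_compl_biUnion_le (hx₀ : 0 ≤ x) (hx₁ : x ≤ 1)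
    (hG : ∀ p ∈ I, #{q ∈ I | G p q} ≤ D)
    (hA : ∀ p ∈ I, ∀ Γ ⊆ I, (∀ q ∈ Γ, ¬ G p q) →
      (#(A p ∩ (Γ.biUnion A)ᶜ) : ℝ) ≤ x * (1 - x) ^ D * #(Γ.biUnion A)ᶜ)
    {Γ : Finset ι} (hΓ : Γ ⊆ I) {p : ι} (hp : p ∈ I) :
    (#(A p ∩ (Γ.biUnion A)ᶜ) : ℝ) ≤ x * #(Γ.biUnion A)ᶜ := by
  induction Γ using Finset.strongInduction generalizing p with
  | H Γ ih =>
    set Γ₁ := {q ∈ Γ | G p q}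
    set Γ₂ := {q ∈ Γ | ¬ G p q}
    have hΓ₂ : Γ₂ ⊆ Γ := filter_subset _ _
    have hunion : Γ₂ ∪ Γ₁ = Γ := by rw [union_comm]; exact filter_union_filter_not_eq _ _
    have hΓ₁ : #Γ₁ ≤ D := (card_le_card (filter_subset_filter _ hΓ)).trans (hG p hp)
    -- adding the neighbours of `p` back one at a time costs a factor `1 - x` each time
    have hpeel := one_sub_pow_mul_card_compl_biUnion_le hx₁ Γ₂
      (disjoint_filter_filter_not _ _ _).symm fun q hq T hT hqT =>
        ih T ((hunion ▸ hT).ssubset_of_not_subset fun h => hqT (h (hunion ▸ mem_union_right _ hq)))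
          ((hunion ▸ hT).trans hΓ) (hΓ (filter_subset _ _ hq))
    rw [hunion] at hpeel
    calc (#(A p ∩ (Γ.biUnion A)ᶜ) : ℝ)
        ≤ #(A p ∩ (Γ₂.biUnion A)ᶜ) := by gcongr
      _ ≤ x * (1 - x) ^ D * #(Γ₂.biUnion A)ᶜ :=
          hA p hp Γ₂ (hΓ₂.trans hΓ) fun q hq => (mem_filter.1 hq).2
      _ ≤ x * (1 - x) ^ #Γ₁ * #(Γ₂.biUnion A)ᶜ :=
          mul_le_mul_of_nonneg_right (mul_le_mul_of_nonneg_left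
            (pow_le_pow_of_le_one (by linarith) (by linarith) hΓ₁) hx₀) (Nat.cast_nonneg _)
      _ ≤ x * #(Γ.biUnion A)ᶜ := by
          rw [mul_assoc]; exact mul_le_mul_of_nonneg_left hpeel hx₀

/-- The symmetric lopsided local lemma, counting outcomes; `G p` is the dependency
neighbourhood of the event `p`. -/
theorem exists_forall_notMem_of_lopsided [Nonempty Ω] (hx₀ : 0 ≤ x) (hx₁ : x < 1)
    (hG : ∀ p ∈ I, #{q ∈ I | G p q} ≤ D)
    (hA : ∀ p ∈ I, ∀ Γ ⊆ I, (∀ q ∈ Γ, ¬ G p q) →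
      (#(A p ∩ (Γ.biUnion A)ᶜ) : ℝ) ≤ x * (1 - x) ^ D * #(Γ.biUnion A)ᶜ) :
    ∃ ω, ∀ p ∈ I, ω ∉ A p := by
  have hpeel := one_sub_pow_mul_card_compl_biUnion_le hx₁.le ∅ (disjoint_empty_left I)
    fun q hq T hT _ => card_inter_compl_biUnion_le hx₀ hx₁.le hG hA (by simpa using hT) hq
  have hpos : (0 : ℝ) < (1 - x) ^ #I * #((∅ : Finset ι).biUnion A)ᶜ := by
    simp only [biUnion_empty, compl_empty, card_univ]
    have : 0 < 1 - x := by linarith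
    positivity
  have : (0 : ℝ) < #(I.biUnion A)ᶜ := hpos.trans_le (by simpa using hpeel)
  obtain ⟨ω, hω⟩ := card_pos.1 (by exact_mod_cast this)
  exact ⟨ω, fun p hp hωp => (mem_compl.1 hω) (mem_biUnion.2 ⟨p, hp, hωp⟩)⟩

end LocalLemma

theorem one_le_exp_one_mul_one_sub_one_div_pow (D : ℕ) :
    1 ≤ Real.exp 1 * (1 - 1 / ((D : ℝ) + 1)) ^ D := by
  rcases D.eq_zero_or_pos with rfl | hD
  · simp [Real.one_le_exp zero_le_one]
  have hprod : (1 - 1 / ((D : ℝ) + 1)) * (1 + (D : ℝ)⁻¹) = 1 := by field_simp; ring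
  calc (1 : ℝ) = (1 - 1 / ((D : ℝ) + 1)) ^ D * (1 + (D : ℝ)⁻¹) ^ D := by
        rw [← mul_pow, hprod, one_pow]
    _ ≤ (1 - 1 / ((D : ℝ) + 1)) ^ D * Real.exp 1 := by
        have : 1 / ((D : ℝ) + 1) ≤ 1 := by rw [div_le_one (by positivity)]; simp
        gcongr
        exact Real.one_add_inv_pow_le_exp
    _ = _ := mul_comm _ _

theorem le_one_div_mul_one_sub_one_div_pow {q : ℝ} (D : ℕ)
    (h : Real.exp 1 * q * ((D : ℝ) + 1) ≤ 1) :
    q ≤ 1 / ((D : ℝ) + 1) * (1 - 1 / ((D : ℝ) + 1)) ^ D := by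
  have := one_le_exp_one_mul_one_sub_one_div_pow D
  have hD : (0 : ℝ) < D + 1 := by positivity
  rw [one_div_mul_eq_div, le_div_iff₀ hD]
  nlinarith [Real.exp_pos 1]

section Hypergraph
variable {α : Type*} [DecidableEq α] {t : ℕ}

theorem card_filter_inter_nonempty_le {E : Finset (Finset α)} {d : ℕ}
    (hmeet : ∀ f ∈ E, #{g ∈ E | g ≠ f ∧ (f ∩ g).Nonempty} ≤ d) {f : Finset α} (hf : f ∈ E) :
    #{g ∈ E | (f ∩ g).Nonempty} ≤ d + 1 := by
  refine (card_le_card fun g hg => ?_).trans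
    ((card_insert_le f _).trans (by simpa using hmeet f hf))
  rw [mem_insert, mem_filter]
  by_cases hgf : g = f
  · exact .inl hgf
  · exact .inr ⟨(mem_filter.1 hg).1, hgf, (mem_filter.1 hg).2⟩

theorem filter_eq_subset_filter_eq {σ σ' : α → Fin t} {f g : Finset α} {i j : Fin t}
    (hout : ∀ v ∉ f, σ v = σ' v) (hin : ∀ v ∈ f, σ v = i → σ' v = i)
    (hj : (f ∩ g).Nonempty → j = i) : {v ∈ g | σ v = j} ⊆ {v ∈ g | σ' v = j} := by
  intro v hv
  obtain ⟨hvg, hvj⟩ := mem_filter.1 hv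
  refine mem_filter.2 ⟨hvg, ?_⟩
  by_cases hvf : v ∈ f
  · obtain rfl := hj ⟨v, mem_inter.2 ⟨hvf, hvg⟩⟩
    exact hin v hvf hvj
  · exact hout v hvf ▸ hvj

variable [Fintype α]

theorem card_badColorings_inter_le (ht : 1 ≤ t) {k : ℕ} (hk : 1 ≤ k) {f : Finset α}
    (hf : k ≤ #f) {i : Fin t} (Γ : Finset (Finset α × Fin t))
    (hΓ : ∀ q ∈ Γ, (f ∩ q.1).Nonempty → q.2 = i) :
    (#(badColorings f i ∩ (Γ.biUnion fun q => badColorings q.1 q.2)ᶜ) : ℝ) ≤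
      (1 - 1 / (t : ℝ)) ^ (k - 1) * (1 - 1 / (t : ℝ) + k / t) *
        #(Γ.biUnion fun q => badColorings q.1 q.2)ᶜ := by
  set Good := (Γ.biUnion fun q => badColorings q.1 q.2)ᶜ
  have hharris := harris_colorClass_inter i f (P := (· ∈ badColorings f i)) (Q := (· ∈ Good))
    (fun σ σ' hin hσ' => by
      simp only [badColorings, mem_filter, mem_univ, true_and] at hσ' ⊢
      refine (card_le_card fun v hv => ?_).trans hσ'
      obtain ⟨hvf, hvi⟩ := mem_filter.1 hv
      exact mem_filter.2 ⟨hvf, hin v hvf hvi⟩)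
    fun σ σ' hout hin hσ => by
      simp only [Good, mem_compl, mem_biUnion, not_exists, not_and, badColorings, mem_filter,
        mem_univ, true_and, not_le] at hσ ⊢
      exact fun q hq => (hσ q hq).trans_le
        (card_le_card (filter_eq_subset_filter_eq hout hin (hΓ q hq)))
  have hinter : ({σ | σ ∈ badColorings f i ∧ σ ∈ Good} : Finset (α → Fin t)) =
      badColorings f i ∩ Good := by
    ext; simp
  rw [hinter, filter_mem_eq_inter, filter_mem_eq_inter, univ_inter, univ_inter] at hharris
  have hbad := mul_le_mul_of_nonneg_right (card_badColorings_le ht i hk hf)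
    (Nat.cast_nonneg (α := ℝ) #Good)
  have htn : (0 : ℝ) < t ^ Fintype.card α := by positivity
  rw [← mul_le_mul_iff_of_pos_left htn]
  calc (t : ℝ) ^ Fintype.card α * #(badColorings f i ∩ Good)
      ≤ #(badColorings f i) * #Good := by exact_mod_cast hharris
    _ ≤ _ := by linarith

theorem exists_coloring_two_le_card_filter_of_fintype {E : Finset (Finset α)} {k d : ℕ}
    (ht : 1 ≤ t) (hk : 1 ≤ k) (hcard : ∀ f ∈ E, k ≤ #f)
    (hmeet : ∀ f ∈ E, #{g ∈ E | g ≠ f ∧ (f ∩ g).Nonempty} ≤ d) {x : ℝ} (hx₀ : 0 ≤ x)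
    (hx₁ : x < 1)
    (hF : (1 - 1 / (t : ℝ)) ^ (k - 1) * (1 - 1 / (t : ℝ) + k / t) ≤
      x * (1 - x) ^ ((d + 1) * (t - 1))) :
    ∃ σ : α → Fin t, ∀ f ∈ E, ∀ i : Fin t, 2 ≤ #{v ∈ f | σ v = i} := by
  have : Nonempty (α → Fin t) := ⟨fun _ => ⟨0, ht⟩⟩
  obtain ⟨σ, hσ⟩ : ∃ σ : α → Fin t, ∀ p ∈ E ×ˢ univ, σ ∉ badColorings p.1 p.2 := by
    refine exists_forall_notMem_of_lopsided (G := fun p q => q.2 ≠ p.2 ∧ (p.1 ∩ q.1).Nonempty)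
      (D := (d + 1) * (t - 1)) hx₀ hx₁ (fun p hp => ?_) fun p hp Γ _ hΓ => ?_
    · obtain ⟨f, i⟩ := p
      calc #{q ∈ E ×ˢ univ | q.2 ≠ i ∧ (f ∩ q.1).Nonempty}
          ≤ #({g ∈ E | (f ∩ g).Nonempty} ×ˢ univ.erase i) :=
            card_le_card fun q hq => by simp_all
        _ ≤ (d + 1) * (t - 1) := by
            rw [card_product, card_erase_of_mem (mem_univ i), card_univ, Fintype.card_fin]
            exact Nat.mul_le_mul_right _
              (card_filter_inter_nonempty_le hmeet (mem_product.1 hp).1)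
    · exact (card_badColorings_inter_le ht hk (hcard _ (mem_product.1 hp).1) Γ
        fun q hq hfq => by_contra fun hqi => hΓ q hq ⟨hqi, hfq⟩).trans
          (mul_le_mul_of_nonneg_right hF (Nat.cast_nonneg _))
  refine ⟨σ, fun f hf i => ?_⟩
  simpa [badColorings, Nat.lt_iff_add_one_le] using hσ (f, i) (mem_product.2 ⟨hf, mem_univ i⟩)

end Hypergraph

theorem exists_coloring_two_le_card_filter {V : Type*} [DecidableEq V] {E : Finset (Finset V)}
    {k d t : ℕ} (ht : 1 ≤ t) (hk : 1 ≤ k) (hcard : ∀ f ∈ E, k ≤ #f)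
    (hmeet : ∀ f ∈ E, #{g ∈ E | g ≠ f ∧ (f ∩ g).Nonempty} ≤ d) {x : ℝ} (hx₀ : 0 ≤ x)
    (hx₁ : x < 1)
    (hF : (1 - 1 / (t : ℝ)) ^ (k - 1) * (1 - 1 / (t : ℝ) + k / t) ≤
      x * (1 - x) ^ ((d + 1) * (t - 1))) :
    ∃ c : V → Fin t, ∀ f ∈ E, ∀ i : Fin t, 2 ≤ #{v ∈ f | c v = i} := by
  set U := E.biUnion id
  set φ : Finset V → Finset U := fun f => f.subtype (· ∈ U)
  have hcard' : ∀ f' ∈ E.image φ, k ≤ #f' := by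
    simp only [mem_image, forall_exists_index, and_imp, forall_apply_eq_imp_iff₂, φ, card_subtype]
    exact fun f hf => filter_true_of_mem (fun v hv => subset_biUnion_of_mem id hf hv) ▸ hcard f hf
  have hmeet' : ∀ f' ∈ E.image φ, #{g' ∈ E.image φ | g' ≠ f' ∧ (f' ∩ g').Nonempty} ≤ d := by
    simp only [mem_image, forall_exists_index, and_imp, forall_apply_eq_imp_iff₂]
    refine fun f hf => (card_le_card fun g' hg' => ?_).trans
      ((card_image_le (f := φ)).trans (hmeet f hf))
    obtain ⟨hg'E, hg'f, ⟨u, hu⟩⟩ := mem_filter.1 hg'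
    obtain ⟨g, hg, rfl⟩ := mem_image.1 hg'E
    simp only [φ, mem_inter, mem_subtype] at hu
    exact mem_image_of_mem _ (mem_filter.2 ⟨hg, fun h => hg'f (h ▸ rfl), u, mem_inter.2 hu⟩)
  obtain ⟨σ, hσ⟩ := exists_coloring_two_le_card_filter_of_fintype ht hk hcard' hmeet' hx₀ hx₁ hF
  refine ⟨fun v => if h : v ∈ U then σ ⟨v, h⟩ else ⟨0, ht⟩, fun f hf i => ?_⟩
  refine (hσ _ (mem_image_of_mem _ hf) i).trans (card_le_card_of_injOn Subtype.val ?_ ?_)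
  · intro u hu
    simp only [coe_filter, Set.mem_ofPred_eq, φ, mem_subtype] at hu
    simpa [u.2] using hu
  · exact Subtype.val_injective.injOn

/-- **Theorem (Chen et al. 2010).** Let `H` be a hypergraph in which every edge
contains at least `k` vertices and meets at most `d` other edges, and let `t ≥ 2`
with `k ≥ 2t`. If `e (1-1/t)^(k-1) (1-1/t+k/t) ((d+1)(t-1)+1) ≤ 1` then `H` has a
`(t,2)`-coloring, i.e. there is a coloring of the vertices with `t` colors such
that every color appears on every edge at least twice. -/
theorem hypergraph_t2_coloring {V : Type*} [DecidableEq V]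
    (E : Finset (Finset V)) (k d t : ℕ) (ht : 2 ≤ t) (hk : 2 * t ≤ k)
    (hcard : ∀ f ∈ E, k ≤ f.card)
    (hmeet : ∀ f ∈ E, (E.filter (fun g => g ≠ f ∧ (f ∩ g).Nonempty)).card ≤ d)
    (hineq : Real.exp 1 * (1 - 1 / (t : ℝ)) ^ (k - 1) *
        (1 - 1 / (t : ℝ) + (k : ℝ) / (t : ℝ)) *
        (((d : ℝ) + 1) * ((t : ℝ) - 1) + 1) ≤ 1) :
    ∃ c : V → Fin t, ∀ f ∈ E, ∀ i : Fin t,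
      2 ≤ (f.filter (fun v => c v = i)).card := by
  set D := (d + 1) * (t - 1)
  have hD : (D : ℝ) = ((d : ℝ) + 1) * ((t : ℝ) - 1) := by
    push_cast [D, Nat.cast_sub (by omega : 1 ≤ t)]; ring
  have hx₁ : 1 / ((D : ℝ) + 1) < 1 := by
    have : (1 : ℝ) ≤ D := by exact_mod_cast Nat.mul_pos d.succ_pos (by omega)
    rw [div_lt_one (by positivity)]
    linarith
  refine exists_coloring_two_le_card_filter (by omega) (by omega) hcard hmeet (by positivity) hx₁
    (le_one_div_mul_one_sub_one_div_pow D ?_)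
  rwa [hD, ← mul_assoc]
end

section
/- (Symmetric lopsided Lovász Local Lemma.) Let $A_1, \ldots, A_n$ be events in a finite probability space $\Omega$ equipped with a probability measure $P$, and let $G$ be a graph on vertex set $\{1, \ldots, n\}$ that is a lopsidependency graph for $A_1, \ldots, A_n$: for every $i$ and every subset $S \subseteq \{1, \ldots, n\} \setminus (\{i\} \cup N_G(i))$ with $P(\bigcap_{j \in S} \overline{A_j}) > 0$, one has $P(A_i \mid \bigcap_{j \in S} \overline{A_j}) \leq P(A_i)$. Suppose each event $A_i$ has probability at most $p$ and each vertex of $G$ has degree at most $\Delta$. If $e \cdot p \cdot (\Delta + 1) \leq 1$ (where $e$ is Euler's number), then $P(\bigcap_{i=1}^{n} \overline{A_i}) > 0$. -/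
open MeasureTheory ProbabilityTheory Finset

/-!
Asymmetric form: if `xᵢ ∈ [0, 1]` and `P(Aᵢ) ≤ xᵢ ∏_{j ∼ i} (1 - xⱼ)`, then
`P(⋂ᵢ Aᵢᶜ) ≥ ∏ᵢ (1 - xᵢ)`. The key estimate, by strong induction on `S`, is
`P(Aᵢ ∩ ⋂_S Aⱼᶜ) ≤ xᵢ P(⋂_S Aⱼᶜ)` for `i ∉ S`. Split `S` into the neighbours `S₁` and the
non-neighbours `S₂` of `i`: lopsidependency bounds the left side by `P(Aᵢ) P(⋂_{S₂} Aⱼᶜ)`, and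
adding the events of `S₁` back one at a time, each costing a factor `1 - xⱼ` by the induction
hypothesis, gives `P(⋂_S Aⱼᶜ) ≥ ∏_{S₁} (1 - xⱼ) P(⋂_{S₂} Aⱼᶜ)`.

The symmetric case takes `xᵢ = 1/(Δ+2)` (the usual `1/(Δ+1)` is not `< 1` when `Δ = 0`); then
`x (1 - x)^Δ ≥ 1/(e (Δ+1))` because `(1 + 1/(Δ+1))^(Δ+1) ≤ e`.
-/

section

variable {Ω ι : Type*}

def noneOf (A : ι → Set Ω) (S : Finset ι) : Set Ω := ⋂ j ∈ S, (A j)ᶜ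

lemma noneOf_empty (A : ι → Set Ω) : noneOf A ∅ = Set.univ := by simp [noneOf]

lemma noneOf_univ [Fintype ι] (A : ι → Set Ω) : noneOf A univ = ⋂ i, (A i)ᶜ := by
  simp [noneOf]

lemma noneOf_insert [DecidableEq ι] (A : ι → Set Ω) (k : ι) (S : Finset ι) :
    noneOf A (insert k S) = (A k)ᶜ ∩ noneOf A S :=
  set_biInter_insert k S _

lemma noneOf_anti (A : ι → Set Ω) {S T : Finset ι} (h : S ⊆ T) : noneOf A T ⊆ noneOf A S :=
  Set.biInter_subset_biInter_left h

variable [MeasurableSpace Ω]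

lemma measurableSet_noneOf {A : ι → Set Ω} (hA : ∀ i, MeasurableSet (A i)) (S : Finset ι) :
    MeasurableSet (noneOf A S) :=
  S.measurableSet_biInter fun j _ => (hA j).compl

/-- Lopsidependency in product form, which unlike the conditional form needs no positivity
side condition. -/
def IsLopsidependencyGraph (P : Measure Ω) (A : ι → Set Ω) (G : SimpleGraph ι) : Prop :=
  ∀ i (S : Finset ι), (∀ j ∈ S, j ≠ i ∧ ¬ G.Adj i j) →
    P.real (A i ∩ noneOf A S) ≤ P.real (A i) * P.real (noneOf A S)

variable {P : Measure Ω} [IsFiniteMeasure P] {A : ι → Set Ω}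

lemma isLopsidependencyGraph_of_cond_le (hA : ∀ i, MeasurableSet (A i)) {G : SimpleGraph ι}
    (h : ∀ i (S : Finset ι), (∀ j ∈ S, j ≠ i ∧ ¬ G.Adj i j) →
      0 < P (noneOf A S) → P[A i | noneOf A S] ≤ P (A i)) :
    IsLopsidependencyGraph P A G := by
  intro i S hS
  obtain h0 | hpos := eq_zero_or_pos (P (noneOf A S))
  · simp [Measure.real, h0, measure_inter_null_of_null_right]
  · rw [Set.inter_comm, measureReal_def, measureReal_def, measureReal_def, ← ENNReal.toReal_mul,
      ← cond_mul_eq_inter (measurableSet_noneOf hA S)]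
    exact ENNReal.toReal_mono (by finiteness) (mul_le_mul_left (h i S hS hpos) _)

lemma one_sub_mul_le_measureReal_noneOf_insert [DecidableEq ι] {k : ι}
    (hAk : MeasurableSet (A k)) {S : Finset ι} {x : ℝ}
    (h : P.real (A k ∩ noneOf A S) ≤ x * P.real (noneOf A S)) :
    (1 - x) * P.real (noneOf A S) ≤ P.real (noneOf A (insert k S)) := by
  have hsplit := measureReal_inter_add_sdiff (μ := P) (s := noneOf A S) hAk
  rw [noneOf_insert, Set.inter_comm, ← Set.sdiff_eq]
  rw [Set.inter_comm] at hsplit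
  linarith

variable (hA : ∀ i, MeasurableSet (A i)) {x : ι → ℝ}
include hA

lemma prod_one_sub_mul_le_measureReal_noneOf_union [DecidableEq ι] (hx1 : ∀ i, x i ≤ 1)
    {U T : Finset ι} (hUT : Disjoint U T)
    (hbound : ∀ V ⊂ U ∪ T, ∀ k ∉ V, P.real (A k ∩ noneOf A V) ≤ x k * P.real (noneOf A V)) :
    (∏ k ∈ T, (1 - x k)) * P.real (noneOf A U) ≤ P.real (noneOf A (U ∪ T)) := by
  induction T using Finset.induction_on with
  | empty => simp
  | insert k T hk ih =>
    rw [disjoint_insert_right] at hUT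
    have hkUT : k ∉ U ∪ T := by simp [hk, hUT.1]
    have hsub : U ∪ T ⊂ U ∪ insert k T := by
      rw [union_insert]
      exact ssubset_insert hkUT
    calc (∏ j ∈ insert k T, (1 - x j)) * P.real (noneOf A U)
        = (1 - x k) * ((∏ j ∈ T, (1 - x j)) * P.real (noneOf A U)) := by
          rw [prod_insert hk, mul_assoc]
      _ ≤ (1 - x k) * P.real (noneOf A (U ∪ T)) := by
          gcongr
          · exact sub_nonneg.2 (hx1 k)
          · exact ih hUT.2 fun V hV => hbound V (hV.trans hsub)
      _ ≤ P.real (noneOf A (insert k (U ∪ T))) :=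
          one_sub_mul_le_measureReal_noneOf_insert (hA k) (hbound _ hsub k hkUT)
      _ = P.real (noneOf A (U ∪ insert k T)) := by rw [union_insert]

variable {G : SimpleGraph ι} [G.LocallyFinite] (hG : IsLopsidependencyGraph P A G)
  (hx0 : ∀ i, 0 ≤ x i) (hx1 : ∀ i, x i ≤ 1)
  (hP : ∀ i, P.real (A i) ≤ x i * ∏ j ∈ G.neighborFinset i, (1 - x j))
include hG hx0 hx1 hP

lemma measureReal_inter_noneOf_le_of_ssubset {S : Finset ι}
    (ih : ∀ V ⊂ S, ∀ k ∉ V, P.real (A k ∩ noneOf A V) ≤ x k * P.real (noneOf A V))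
    {i : ι} (hi : i ∉ S) :
    P.real (A i ∩ noneOf A S) ≤ x i * P.real (noneOf A S) := by
  classical
  set S₁ := S.filter (G.Adj i)
  set S₂ := S.filter fun j => ¬ G.Adj i j
  have hS : S₂ ∪ S₁ = S := by
    rw [union_comm]
    exact filter_union_filter_not_eq _ S
  have hS₂ : ∀ j ∈ S₂, j ≠ i ∧ ¬ G.Adj i j := fun j hj =>
    ⟨by rintro rfl; exact hi (mem_filter.1 hj).1, (mem_filter.1 hj).2⟩
  have hS₁ : S₁ ⊆ G.neighborFinset i := fun j hj => by
    simpa using (mem_filter.1 hj).2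
  calc P.real (A i ∩ noneOf A S)
      ≤ P.real (A i ∩ noneOf A S₂) :=
        measureReal_mono (Set.inter_subset_inter_right _ (noneOf_anti A (filter_subset _ _)))
    _ ≤ P.real (A i) * P.real (noneOf A S₂) := hG i S₂ hS₂
    _ ≤ x i * (∏ j ∈ G.neighborFinset i, (1 - x j)) * P.real (noneOf A S₂) := by
        gcongr
        exact hP i
    _ ≤ x i * (∏ j ∈ S₁, (1 - x j)) * P.real (noneOf A S₂) := by
        gcongr ?_ * ?_ * _
        · exact hx0 i
        · exact prod_le_prod_of_subset_of_le_one hS₁ (fun j _ => sub_nonneg.2 (hx1 j))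
            fun j _ _ => sub_le_self _ (hx0 j)
    _ ≤ x i * P.real (noneOf A (S₂ ∪ S₁)) := by
        rw [mul_assoc]
        gcongr
        · exact hx0 i
        · exact prod_one_sub_mul_le_measureReal_noneOf_union hA hx1
            (disjoint_filter_filter_not _ _ _).symm (by rwa [hS])
    _ = x i * P.real (noneOf A S) := by rw [hS]

lemma measureReal_inter_noneOf_le (S : Finset ι) {i : ι} (hi : i ∉ S) :
    P.real (A i ∩ noneOf A S) ≤ x i * P.real (noneOf A S) := by
  induction S using Finset.strongInduction generalizing i with
  | H S ih =>
    exact measureReal_inter_noneOf_le_of_ssubset hA hG hx0 hx1 hP (fun V hV k => ih V hV) hi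

theorem prod_one_sub_le_measureReal_iInter_compl [Fintype ι] [IsProbabilityMeasure P] :
    ∏ i, (1 - x i) ≤ P.real (⋂ i, (A i)ᶜ) := by
  classical
  simpa [noneOf_empty, noneOf_univ] using
    prod_one_sub_mul_le_measureReal_noneOf_union hA hx1 (disjoint_empty_left univ)
      fun V _ k => measureReal_inter_noneOf_le hA hG hx0 hx1 hP V

end

lemma le_inv_mul_one_sub_inv_pow_of_exp_mul_le {p : ℝ} {Δ : ℕ}
    (h : Real.exp 1 * p * ((Δ : ℝ) + 1) ≤ 1) :
    p ≤ ((Δ : ℝ) + 2)⁻¹ * (1 - ((Δ : ℝ) + 2)⁻¹) ^ Δ := by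
  have hpow : (Real.exp 1)⁻¹ ≤ (1 - ((Δ : ℝ) + 2)⁻¹) ^ (Δ + 1) := by
    have hbase : 1 - ((Δ : ℝ) + 2)⁻¹ = (1 + (((Δ + 1 : ℕ) : ℝ))⁻¹)⁻¹ := by
      push_cast
      field_simp
      ring
    rw [hbase, inv_pow]
    exact inv_anti₀ (by positivity) Real.one_add_inv_pow_le_exp
  calc p ≤ (Real.exp 1)⁻¹ * ((Δ : ℝ) + 1)⁻¹ := by
        rw [← mul_inv, ← one_div, le_div_iff₀ (by positivity)]
        linarith
    _ ≤ (1 - ((Δ : ℝ) + 2)⁻¹) ^ (Δ + 1) * ((Δ : ℝ) + 1)⁻¹ := by gcongr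
    _ = ((Δ : ℝ) + 2)⁻¹ * (1 - ((Δ : ℝ) + 2)⁻¹) ^ Δ := by
        rw [pow_succ]
        field_simp
        ring

theorem lopsided_LLL_symmetric_general {Ω : Type*} [MeasurableSpace Ω]
    (P : Measure Ω) [IsProbabilityMeasure P]
    (n : ℕ) (A : Fin n → Set Ω) (hA : ∀ i, MeasurableSet (A i))
    (G : SimpleGraph (Fin n)) [DecidableRel G.Adj]
    (hlops : ∀ i : Fin n, ∀ S : Finset (Fin n),
      (∀ j ∈ S, j ≠ i ∧ ¬ G.Adj i j) →
      0 < P (⋂ j ∈ S, (A j)ᶜ) →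
      ProbabilityTheory.cond P (⋂ j ∈ S, (A j)ᶜ) (A i) ≤ P (A i))
    (p : ℝ) (Δ : ℕ)
    (hp : ∀ i, (P (A i)).toReal ≤ p)
    (hdeg : ∀ i, G.degree i ≤ Δ)
    (hineq : Real.exp 1 * p * ((Δ : ℝ) + 1) ≤ 1) :
    0 < P (⋂ i, (A i)ᶜ) := by
  set x : ℝ := ((Δ : ℝ) + 2)⁻¹
  have hx0 : 0 < x := by positivity
  have hx1 : x < 1 := inv_lt_one_of_one_lt₀ (by linarith [Δ.cast_nonneg (α := ℝ)])
  have hP : ∀ i, P.real (A i) ≤ x * ∏ _j ∈ G.neighborFinset i, (1 - x) := fun i => by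
    rw [prod_const, G.card_neighborFinset_eq_degree]
    calc P.real (A i) ≤ p := hp i
      _ ≤ x * (1 - x) ^ Δ := le_inv_mul_one_sub_inv_pow_of_exp_mul_le hineq
      _ ≤ x * (1 - x) ^ G.degree i := by
          gcongr _ * ?_
          exact pow_le_pow_of_le_one (sub_nonneg.2 hx1.le) (sub_le_self _ hx0.le) (hdeg i)
  have hbound := prod_one_sub_le_measureReal_iInter_compl hA
    (isLopsidependencyGraph_of_cond_le hA hlops) (fun _ => hx0.le) (fun _ => hx1.le) hP
  have hpos : 0 < P.real (⋂ i, (A i)ᶜ) :=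
    (prod_pos fun _ _ => sub_pos.2 hx1).trans_le hbound
  exact (ENNReal.toReal_pos_iff.1 hpos).1

/-- **Symmetric lopsided Lovász Local Lemma.** Let `A 1, …, A n` be events in a
finite probability space `(Ω, P)` and let `G` be a lopsidependency graph for them:
for every `i` and every set `S` of indices that are neither `i` nor adjacent to `i`
in `G`, with `P(⋂_{j ∈ S} Aⱼᶜ) > 0`, one has `P(Aᵢ | ⋂_{j ∈ S} Aⱼᶜ) ≤ P(Aᵢ)`.
If each `P(Aᵢ) ≤ p`, each vertex of `G` has degree at most `Δ`, and
`e·p·(Δ+1) ≤ 1`, then `P(⋂ᵢ Aᵢᶜ) > 0`. -/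
theorem lopsided_LLL_symmetric {Ω : Type*} [Fintype Ω] [MeasurableSpace Ω]
    (P : Measure Ω) [IsProbabilityMeasure P]
    (n : ℕ) (A : Fin n → Set Ω) (hA : ∀ i, MeasurableSet (A i))
    (G : SimpleGraph (Fin n)) [DecidableRel G.Adj]
    (hlops : ∀ i : Fin n, ∀ S : Finset (Fin n),
      (∀ j ∈ S, j ≠ i ∧ ¬ G.Adj i j) →
      0 < P (⋂ j ∈ S, (A j)ᶜ) →
      ProbabilityTheory.cond P (⋂ j ∈ S, (A j)ᶜ) (A i) ≤ P (A i))
    (p : ℝ) (Δ : ℕ)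
    (hp : ∀ i, (P (A i)).toReal ≤ p)
    (hdeg : ∀ i, G.degree i ≤ Δ)
    (hineq : Real.exp 1 * p * ((Δ : ℝ) + 1) ≤ 1) :
    0 < P (⋂ i, (A i)ᶜ) :=
  lopsided_LLL_symmetric_general P n A hA G hlops p Δ hp hdeg hineq
end

section
/- (McDiarmid's lopsidependency lemma.) Let $n, t$ be positive integers, let $V = \{1, \ldots, n\}$, and let $P$ be a product probability measure on the space $\Omega$ of functions $\omega : V \to \{1, \ldots, t\}$ (the coordinates $\omega_v$ are independent). For each color $j \in \{1, \ldots, t\}$, let $\mathscr{C}^{(j)}$ be a collection of subsets of $V$, and for each $f \in \mathscr{C}^{(j)}$ let $D_f^{(j)}$ be a downset (hereditary collection, i.e., closed under taking subsets) of subsets of $f$, and define the event $A_f^{(j)} = \{\omega \in \Omega : \{v \in f : \omega_v = j\} \in D_f^{(j)}\}$. Let $G$ be the graph whose vertices are the pairs $(f, j)$ with $f \in \mathscr{C}^{(j)}$, where $(f, j)$ and $(f', j')$ are adjacent if and only if $j \neq j'$ and $f \cap f' \neq \emptyset$. Then $G$ is a lopsidependency graph for the events $A_f^{(j)}$: for every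 pair $(f, j)$ and every set $S$ of pairs $(f', j')$, each of which is neither equal to $(f, j)$ nor adjacent to $(f, j)$ in $G$, such that $P(\bigcap_{(f', j') \in S} \overline{A_{f'}^{(j')}}) > 0$, one has $P(A_f^{(j)} \mid \bigcap_{(f', j') \in S} \overline{A_{f'}^{(j')}}) \leq P(A_f^{(j)})$. -/
/-!
Write `F ω = {v ∈ f : ω v = j}`. The event `A` is `F ∈ D` with `D` a downset, and the conditioning
event `B` is preserved when the vertices of `f` that do not have colour `j` are recoloured
arbitrarily: events of colour `j` are upsets in their colour class, events of other colours live
outside `f`. For independent samples `ω'` with `F ω' = a` and `ω ∈ B` with `F ω = b`, exchanging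
their colours on `f \ b` preserves the product measure and yields samples with `F = a ∩ b` and,
inside `B`, `F = a ∪ b`. So the law of `F` and the law of `F` on `B` satisfy the Ahlswede–Daykin
hypothesis, and the four functions theorem makes downsets of `F` less likely on `B`.
-/

open MeasureTheory ProbabilityTheory Finset
open scoped FinsetFamily

theorem sum_mul_sum_le_of_isLowerSet {L β : Type*} [DistribLattice L] [Fintype L]
    [CommSemiring β] [LinearOrder β] [IsStrictOrderedRing β] [ExistsAddOfLE β]
    {f g : L → β} (hf : 0 ≤ f) (hg : 0 ≤ g) (h : ∀ a b, f a * g b ≤ f (a ⊓ b) * g (a ⊔ b))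
    {D : Finset L} (hD : IsLowerSet (D : Set L)) :
    (∑ a, f a) * ∑ a ∈ D, g a ≤ (∑ a ∈ D, f a) * ∑ a, g a := by
  classical
  have hinfs : univ ⊼ D ⊆ D := by
    intro x hx
    obtain ⟨a, -, b, hb, rfl⟩ := mem_infs.1 hx
    exact hD inf_le_right hb
  calc (∑ a, f a) * ∑ a ∈ D, g a
      ≤ (∑ a ∈ univ ⊼ D, f a) * ∑ a ∈ univ ⊻ D, g a :=
        four_functions_theorem f g f g hf hg hf hg h _ _
    _ ≤ (∑ a ∈ D, f a) * ∑ a, g a :=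
      mul_le_mul (sum_le_sum_of_subset_of_nonneg hinfs fun a _ _ => hf a)
        (sum_le_sum_of_subset_of_nonneg (subset_univ _) fun a _ _ => hg a)
        (sum_nonneg fun a _ => hg a) (sum_nonneg fun a _ => hf a)

theorem measureReal_inter_preimage_le_mul {Ω L : Type*} [MeasurableSpace Ω] [DistribLattice L]
    [Fintype L] [MeasurableSpace L] [MeasurableSingletonClass L]
    {P : Measure Ω} [IsProbabilityMeasure P] {F : Ω → L} (hF : Measurable F) (B : Set Ω)
    (h : ∀ a b, P.real (F ⁻¹' {a}) * P.real (F ⁻¹' {b} ∩ B) ≤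
      P.real (F ⁻¹' {a ⊓ b}) * P.real (F ⁻¹' {a ⊔ b} ∩ B))
    {D : Finset L} (hD : IsLowerSet (D : Set L)) :
    P.real (B ∩ F ⁻¹' D) ≤ P.real B * P.real (F ⁻¹' D) := by
  have hfib : ∀ a, MeasurableSet (F ⁻¹' {a}) := fun a => hF (measurableSet_singleton a)
  have hsum : ∀ (Q : Measure Ω) [IsFiniteMeasure Q] (s : Finset L),
      ∑ a ∈ s, Q.real (F ⁻¹' {a}) = Q.real (F ⁻¹' s) :=
    fun Q _ s => sum_measureReal_preimage_singleton s fun a _ => hfib a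
  have hfour := sum_mul_sum_le_of_isLowerSet (f := fun a => P.real (F ⁻¹' {a}))
    (g := fun a => (P.restrict B).real (F ⁻¹' {a})) (fun _ => measureReal_nonneg)
    (fun _ => measureReal_nonneg) (by simpa only [measureReal_restrict_apply (hfib _)] using h) hD
  rw [hsum P, hsum P, hsum, hsum, coe_univ, Set.preimage_univ, probReal_univ, one_mul,
    measureReal_restrict_apply (hF D.measurableSet), measureReal_restrict_apply .univ,
    Set.univ_inter] at hfour
  rwa [Set.inter_comm, mul_comm]

theorem cond_le_of_measureReal_inter_le_mul {Ω : Type*} [MeasurableSpace Ω] {P : Measure Ω}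
    [IsFiniteMeasure P] {s t : Set Ω} (ht : MeasurableSet t)
    (h : P.real (s ∩ t) ≤ P.real s * P.real t) : P[t | s] ≤ P t := by
  have h' : P (s ∩ t) ≤ P s * P t := by
    rwa [← ENNReal.toReal_le_toReal (by finiteness) (by finiteness), ENNReal.toReal_mul]
  calc P[t | s] = (P s)⁻¹ * P (s ∩ t) := cond_apply' ht P
    _ ≤ (P s)⁻¹ * P s * P t := by rw [mul_assoc]; gcongr
    _ ≤ P t := by grw [ENNReal.inv_mul_le_one, one_mul]

theorem measurePreserving_piecewise_swap {ι α : Type*} [Fintype ι] [DecidableEq ι]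
    [MeasurableSpace α] (μ : ι → Measure α) [∀ i, SigmaFinite (μ i)] (T : Finset ι) :
    MeasurePreserving (fun p : (ι → α) × (ι → α) => (T.piecewise p.2 p.1, T.piecewise p.1 p.2))
      ((Measure.pi μ).prod (Measure.pi μ)) ((Measure.pi μ).prod (Measure.pi μ)) := by
  have e := measurePreserving_arrowProdEquivProdArrow α α ι μ μ
  have hswap : ∀ i, MeasurePreserving (fun x : α × α => if i ∈ T then x.swap else x)
      ((μ i).prod (μ i)) ((μ i).prod (μ i)) := fun i => by
    split_ifs
    · exact Measure.measurePreserving_swap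
    · exact MeasurePreserving.id _
  convert e.comp ((measurePreserving_pi _ _ hswap).comp e.symm) using 1
  ext p i <;> by_cases hi : i ∈ T <;>
    simp [hi, MeasurableEquiv.arrowProdEquivProdArrow, Equiv.arrowProdEquivProdArrow]

section Recolouring

variable {ι α : Type*}

def ClosedUnderRecolouring (f : Finset ι) (j : α) (B : Set (ι → α)) : Prop :=
  ∀ ω ∈ B, ∀ ω' : ι → α, (∀ v, (v ∈ f → ω v = j) → ω' v = ω v) → ω' ∈ B

theorem ClosedUnderRecolouring.iInter {κ : Sort*} {f : Finset ι} {j : α} {B : κ → Set (ι → α)}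
    (h : ∀ q, ClosedUnderRecolouring f j (B q)) : ClosedUnderRecolouring f j (⋂ q, B q) :=
  fun ω hω ω' hω' => Set.mem_iInter.2 fun q => h q ω (Set.mem_iInter.1 hω q) ω' hω'

variable [DecidableEq α]

def colourClass (f : Finset ι) (j : α) (ω : ι → α) : Finset ι := f.filter (ω · = j)

theorem closedUnderRecolouring_preimage_colourClass_of_isUpperSet {f : Finset ι} {j : α}
    (g : Finset ι) {E : Set (Finset ι)} (hE : IsUpperSet E) :
    ClosedUnderRecolouring f j (colourClass g j ⁻¹' E) := by
  refine fun ω hω ω' hω' => hE (fun v hv => ?_) hω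
  simp only [colourClass, mem_filter] at hv ⊢
  exact ⟨hv.1, (hω' v fun _ => hv.2).trans hv.2⟩

theorem closedUnderRecolouring_preimage_colourClass_of_disjoint {f g : Finset ι} {j : α}
    (hfg : Disjoint f g) (j' : α) (E : Set (Finset ι)) :
    ClosedUnderRecolouring f j (colourClass g j' ⁻¹' E) := by
  intro ω hω ω' hω'
  have : colourClass g j' ω' = colourClass g j' ω :=
    filter_congr fun v hv => by rw [hω' v fun hvf => absurd hv (disjoint_left.1 hfg hvf)]
  rwa [Set.mem_preimage, this]

theorem measurable_colourClass [MeasurableSpace α] [MeasurableSingletonClass α]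
    (f : Finset ι) (j : α) : Measurable (colourClass f j) := by
  refine measurable_finset_iff.2 fun v => ?_
  simp only [colourClass, mem_filter]
  fun_prop

variable [DecidableEq ι]

theorem colourClass_piecewise_inf (f : Finset ι) (j : α) (ω ω' : ι → α) :
    colourClass f j ((f \ colourClass f j ω).piecewise ω ω') =
      colourClass f j ω' ⊓ colourClass f j ω := by
  ext v
  by_cases hv : v ∈ f <;> by_cases h : ω v = j <;> simp [colourClass, piecewise, *]

theorem colourClass_piecewise_sup (f : Finset ι) (j : α) (ω ω' : ι → α) :
    colourClass f j ((f \ colourClass f j ω).piecewise ω' ω) =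
      colourClass f j ω' ⊔ colourClass f j ω := by
  ext v
  by_cases hv : v ∈ f <;> by_cases h : ω v = j <;> simp [colourClass, piecewise, *]

theorem ClosedUnderRecolouring.piecewise_mem {f : Finset ι} {j : α} {B : Set (ι → α)}
    (hB : ClosedUnderRecolouring f j B) {ω : ι → α} (hω : ω ∈ B) (ω' : ι → α) :
    (f \ colourClass f j ω).piecewise ω' ω ∈ B := by
  refine hB ω hω _ fun v hv => piecewise_eq_of_notMem _ _ _ fun hv' => ?_
  simp only [colourClass, mem_sdiff, mem_filter] at hv'
  exact hv'.2 ⟨hv'.1, hv hv'.1⟩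

variable [Fintype ι] [MeasurableSpace α]

theorem measureReal_colourClass_coupling (μ : ι → Measure α) [∀ i, IsProbabilityMeasure (μ i)]
    {f : Finset ι} {j : α} {B : Set (ι → α)} (hB : ClosedUnderRecolouring f j B)
    (a b : Finset ι) :
    (Measure.pi μ).real (colourClass f j ⁻¹' {a}) *
        (Measure.pi μ).real (colourClass f j ⁻¹' {b} ∩ B) ≤
      (Measure.pi μ).real (colourClass f j ⁻¹' {a ⊓ b}) *
        (Measure.pi μ).real (colourClass f j ⁻¹' {a ⊔ b} ∩ B) := by
  have hσ := measurePreserving_piecewise_swap μ (f \ b)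
  have hmaps : (colourClass f j ⁻¹' {a}) ×ˢ (colourClass f j ⁻¹' {b} ∩ B) ⊆
      (fun p : (ι → α) × (ι → α) => ((f \ b).piecewise p.2 p.1, (f \ b).piecewise p.1 p.2)) ⁻¹'
        ((colourClass f j ⁻¹' {a ⊓ b}) ×ˢ (colourClass f j ⁻¹' {a ⊔ b} ∩ B)) := by
    rintro ⟨ω', ω⟩ ⟨rfl, rfl, hω⟩
    exact ⟨colourClass_piecewise_inf f j ω ω', colourClass_piecewise_sup f j ω ω',
      hB.piecewise_mem hω ω'⟩
  rw [← measureReal_prod_prod, ← measureReal_prod_prod]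
  exact (measureReal_mono hmaps).trans
    (ENNReal.toReal_mono (by finiteness) (hσ.measure_preimage_le _))

end Recolouring

theorem mcdiarmid_lopsidependency_general (n t : ℕ)
    (μ : Fin n → Measure (Fin t)) [∀ v, IsProbabilityMeasure (μ v)]
    (C : Fin t → Finset (Finset (Fin n)))
    (D : Fin t → Finset (Fin n) → Finset (Finset (Fin n)))
    (hDdown : ∀ j f, f ∈ C j → ∀ a ∈ D j f, ∀ b ⊆ a, b ∈ D j f)
    (f : Finset (Fin n)) (j : Fin t) (hf : f ∈ C j)
    (S : Finset (Finset (Fin n) × Fin t))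
    (hS : ∀ q ∈ S, q.1 ∈ C q.2 ∧ q ≠ (f, j) ∧ ¬(q.2 ≠ j ∧ (f ∩ q.1).Nonempty)) :
    ProbabilityTheory.cond (Measure.pi μ)
        (⋂ q ∈ S, {ω : Fin n → Fin t | q.1.filter (fun v => ω v = q.2) ∈ D q.2 q.1}ᶜ)
        {ω : Fin n → Fin t | f.filter (fun v => ω v = j) ∈ D j f}
      ≤ Measure.pi μ {ω : Fin n → Fin t | f.filter (fun v => ω v = j) ∈ D j f} := by
  have hD : ∀ j g, g ∈ C j → IsLowerSet (D j g : Set (Finset (Fin n))) :=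
    fun j g hg _ b hba ha => hDdown j g hg _ ha b hba
  have hB : ClosedUnderRecolouring f j
      (⋂ q ∈ S, {ω : Fin n → Fin t | q.1.filter (fun v => ω v = q.2) ∈ D q.2 q.1}ᶜ) := by
    refine .iInter fun ⟨g, j'⟩ => .iInter fun hq => ?_
    obtain ⟨hg, -, hadj⟩ := hS _ hq
    dsimp only at hg hadj ⊢
    obtain rfl | hj' := eq_or_ne j' j
    · exact closedUnderRecolouring_preimage_colourClass_of_isUpperSet g (hD j' g hg).compl
    · have hfg : Disjoint f g :=
        disjoint_iff_inter_eq_empty.2 (not_nonempty_iff_eq_empty.1 fun h => hadj ⟨hj', h⟩)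
      exact closedUnderRecolouring_preimage_colourClass_of_disjoint hfg j'
        (D j' g : Set (Finset (Fin n)))ᶜ
  exact cond_le_of_measureReal_inter_le_mul (measurable_colourClass f j (D j f).measurableSet)
    (measureReal_inter_preimage_le_mul (measurable_colourClass f j) _
      (measureReal_colourClass_coupling μ hB) (hD j f hf))

/-- **McDiarmid's lopsidependency lemma.** Let `Ω = (Fin n → Fin t)` with a product
probability measure `Measure.pi μ` (coordinates independent). For each color `j`,
let `C j` be a collection of subsets of `V = Fin n`, and for each `f ∈ C j` let
`D j f` be a downset of subsets of `f`; define the event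
`A_f^j = {ω : {v ∈ f : ω v = j} ∈ D j f}`. Then the graph in which `(f, j)` and
`(f', j')` are adjacent iff `j ≠ j'` and `f ∩ f' ≠ ∅` is a lopsidependency graph
for these events: for every `(f, j)` with `f ∈ C j` and every set `S` of pairs,
each of which is neither `(f, j)` nor adjacent to `(f, j)`, with
`P(⋂_{(f',j') ∈ S} (A_{f'}^{j'})ᶜ) > 0`, one has
`P(A_f^j | ⋂_{(f',j') ∈ S} (A_{f'}^{j'})ᶜ) ≤ P(A_f^j)`. -/
theorem mcdiarmid_lopsidependency (n t : ℕ)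
    (μ : Fin n → Measure (Fin t)) [∀ v, IsProbabilityMeasure (μ v)]
    (C : Fin t → Finset (Finset (Fin n)))
    (D : Fin t → Finset (Fin n) → Finset (Finset (Fin n)))
    (hDsub : ∀ j f, f ∈ C j → ∀ a ∈ D j f, a ⊆ f)
    (hDdown : ∀ j f, f ∈ C j → ∀ a ∈ D j f, ∀ b ⊆ a, b ∈ D j f)
    (f : Finset (Fin n)) (j : Fin t) (hf : f ∈ C j)
    (S : Finset (Finset (Fin n) × Fin t))
    (hS : ∀ q ∈ S, q.1 ∈ C q.2 ∧ q ≠ (f, j) ∧ ¬(q.2 ≠ j ∧ (f ∩ q.1).Nonempty))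
    (hpos : 0 < Measure.pi μ
      (⋂ q ∈ S, {ω : Fin n → Fin t | q.1.filter (fun v => ω v = q.2) ∈ D q.2 q.1}ᶜ)) :
    ProbabilityTheory.cond (Measure.pi μ)
        (⋂ q ∈ S, {ω : Fin n → Fin t | q.1.filter (fun v => ω v = q.2) ∈ D q.2 q.1}ᶜ)
        {ω : Fin n → Fin t | f.filter (fun v => ω v = j) ∈ D j f}
      ≤ Measure.pi μ {ω : Fin n → Fin t | f.filter (fun v => ω v = j) ∈ D j f} :=
  mcdiarmid_lopsidependency_general n t μ C D hDdown f j hf S hS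
end
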